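/- Consider the B-HSVM objective F(u) = f(u) + g(u) on ℝ^{p+1}, u = (b, w), where f(b, w) = (1/n) Σ_i φ_H(y_i(b + x_iᵀw)) and g(b, w) = λ₁‖w‖₁ + (λ₂/2)‖w‖² + (λ₃/2)b² with λ₁ ≥ 0 and λ₂, λ₃ > 0. Then g is strongly convex with modulus min(λ₂, λ₃), F has a unique minimizer u*, and any sequence {u^k} satisfying for all k ≥ 1: u^k minimizes Q(u, û^{k−1}) = f(û^{k−1}) + ⟨∇f(û^{k−1}), u − û^{k−1}⟩ + (L_k/2)‖u − û^{k−1}‖² + g(u) with û^{k−1} = u^{k−1} + ω_{k−1}(u^{k−1} − u^{k−2}), 0 ≤ ω_{k−1} ≤ √(L_{k−1}/L_k), 0 < L_k ≤ L_f, the descent condition f(u^k) ≤ f(û^{k−1}) + ⟨∇f(û^{k−1}), u^k − û^{k−1}⟩ + (L_k/2)‖u^k − û^{k−1}‖², and F(u^k) ≤ F(u^{k−1}), converges R-linearly to u*: there exist C > 0 and 0 < τ < 1 with ‖u^k − u*‖ ≤ C τ^k for all k. -/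

import Mathlib

open scoped RealInnerProductSpace

/-- The huberized hinge loss. -/
noncomputable def phiH (δ t : ℝ) : ℝ :=
  if 1 < t then 0 else if 1 - δ < t then (1 - t) ^ 2 / (2 * δ) else 1 - t - δ / 2

/-- The subdifferential of `h` at `v`: the set of (global) subgradients. -/
def SubderivAt {m : ℕ} (h : EuclideanSpace ℝ (Fin m) → ℝ)
    (v : EuclideanSpace ℝ (Fin m)) : Set (EuclideanSpace ℝ (Fin m)) :=
  {g | ∀ z, h z ≥ h v + ⟪g, z - v⟫}

/-!
Write `F = f + g` and `μ = min λ₂ λ₃`. Subtracting `μ/2 ‖u‖²` from the regularizer leaves a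
regularizer of the same shape with nonnegative weights, so `g` is `μ`-strongly convex; the
huberized hinge loss is convex because its derivative is a clamp. Hence `F` is strongly convex and
coercive, with a unique minimizer `u*`.

The model `Q(·, û)` is `(L + μ)`-strongly convex and minimized at the new iterate, and `f` lies
above its tangents; with the descent condition this gives, for every `v`,
`F(u⁺) + (L + μ)/2 ‖v - u⁺‖² ≤ F(v) + L/2 ‖v - û‖²`.
Taking `v = uᵏ` yields sufficient decrease, and `v = (1 - t) uᵏ + t u*` a contraction of
`F(uᵏ) - F(u*)` up to the momentum term, which the bound on `ω` controls by
`Lₖ ‖uᵏ - uᵏ⁻¹‖²`. Averaging the two with weights `t` and `1 - t` makes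
`F(uᵏ) - F(u*) + (1 - t)(Lₖ + μ)/2 ‖uᵏ - uᵏ⁻¹‖²` decay like `(1 - t²)ᵏ`, and strong convexity at
`u*` turns this into R-linear convergence of the iterates.
-/

open Set Filter Topology

lemma ConvexOn.finset_sum {E ι : Type*} [AddCommGroup E] [Module ℝ E] {s : Set E}
    (hs : Convex ℝ s) {t : Finset ι} {c : ι → E → ℝ} (hc : ∀ i ∈ t, ConvexOn ℝ s (c i)) :
    ConvexOn ℝ s fun z => ∑ i ∈ t, c i z := by
  simpa only [← Finset.sum_apply] using
    Finset.sum_induction c (ConvexOn ℝ s) (fun _ _ => ConvexOn.add) (convexOn_const 0 hs) hc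

lemma ConvexOn.comp_euclideanSpace_apply {ι : Type*} [Fintype ι] {φ : ℝ → ℝ}
    (hφ : ConvexOn ℝ univ φ) (i : ι) : ConvexOn ℝ univ fun u : EuclideanSpace ℝ ι => φ (u i) :=
  hφ.comp_linearMap (EuclideanSpace.proj i : EuclideanSpace ℝ ι →L[ℝ] ℝ).toLinearMap

lemma StrongConvexOn.add {E : Type*} [NormedAddCommGroup E] [NormedSpace ℝ E] {s : Set E}
    {m n : ℝ} {h k : E → ℝ} (hh : StrongConvexOn s m h) (hk : StrongConvexOn s n k) :
    StrongConvexOn s (m + n) (h + k) := by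
  unfold StrongConvexOn at *
  convert hh.add hk using 1
  ext r
  simp only [Pi.add_apply]
  ring

lemma exists_isMinOn_of_half_sq_norm_le {E : Type*} [NormedAddCommGroup E] [ProperSpace E]
    {F : E → ℝ} (hF : Continuous F) {μ : ℝ} (hμ : 0 < μ)
    (hgrowth : ∀ v, μ / 2 * ‖v‖ ^ 2 ≤ F v) : ∃ x, IsMinOn F univ x := by
  have hcoercive : Tendsto F (cocompact E) atTop := tendsto_atTop_mono hgrowth <|
    ((tendsto_pow_atTop two_ne_zero).const_mul_atTop (by positivity)).comp
      tendsto_norm_cocompact_atTop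
  obtain ⟨x, hx⟩ := hF.exists_forall_le hcoercive
  exact ⟨x, fun v _ => hx v⟩

section StrongConvexity

variable {E : Type*} [NormedAddCommGroup E] [InnerProductSpace ℝ E]

lemma strongConvexOn_univ_half_sq_norm_sub (m : ℝ) (w : E) :
    StrongConvexOn univ m fun z => m / 2 * ‖z - w‖ ^ 2 := by
  rw [strongConvexOn_iff_convex]
  have hlin : (fun z => m / 2 * ‖z - w‖ ^ 2 - m / 2 * ‖z‖ ^ 2) =
      fun z => innerₛₗ ℝ (-m • w) z + m / 2 * ‖w‖ ^ 2 := by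
    ext z
    simp only [innerₛₗ_apply_apply, real_inner_smul_left, norm_sub_sq_real, real_inner_comm w]
    ring
  rw [hlin]
  exact ((innerₛₗ ℝ (-m • w)).convexOn convex_univ).add_const _

lemma StrongConvexOn.inner_add_sq_le_sub {m : ℝ} {h : E → ℝ} (hh : StrongConvexOn univ m h)
    {v d : E} (hd : ∀ z, h v + ⟪d, z - v⟫ ≤ h z) (z : E) :
    ⟪d, z - v⟫ + m / 2 * ‖z - v‖ ^ 2 ≤ h z - h v := by
  have hseg : ∀ t ∈ Ioo (0 : ℝ) 1, ⟪d, z - v⟫ + m / 2 * (1 - t) * ‖z - v‖ ^ 2 ≤ h z - h v := by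
    rintro t ⟨ht0, ht1⟩
    have hconv := hh.2 (mem_univ v) (mem_univ z) (sub_nonneg.2 ht1.le) ht0.le (by ring)
    have hsub := hd ((1 - t) • v + t • z)
    have hdir : (1 - t) • v + t • z - v = t • (z - v) := by module
    rw [hdir, real_inner_smul_right] at hsub
    rw [norm_sub_rev] at hconv
    simp only [smul_eq_mul] at hconv
    nlinarith
  have hcont : Continuous fun t : ℝ => ⟪d, z - v⟫ + m / 2 * (1 - t) * ‖z - v‖ ^ 2 := by
    fun_prop
  have hlim := (hcont.tendsto 0).mono_left (nhdsWithin_le_nhds (s := Ioi 0))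
  simp only [sub_zero, mul_one] at hlim
  exact le_of_tendsto hlim (by filter_upwards [Ioo_mem_nhdsGT one_pos] with t ht using hseg t ht)

lemma StrongConvexOn.add_sq_le_of_isMinOn {m : ℝ} {h : E → ℝ} (hh : StrongConvexOn univ m h)
    {x : E} (hx : IsMinOn h univ x) (z : E) : h x + m / 2 * ‖z - x‖ ^ 2 ≤ h z := by
  have := hh.inner_add_sq_le_sub (d := 0) (fun z => by simpa using hx (mem_univ z)) z
  rw [inner_zero_left] at this
  linarith

lemma ConvexOn.add_inner_le_of_hasGradientAt [CompleteSpace E] {f : E → ℝ}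
    (hf : ConvexOn ℝ univ f) {x d : E} (hd : HasGradientAt f d x) (z : E) :
    f x + ⟪d, z - x⟫ ≤ f z := by
  have hline : HasDerivAt (f ∘ AffineMap.lineMap (k := ℝ) x z) ⟪d, z - x⟫ 0 := by
    have hfd : HasFDerivAt f (InnerProductSpace.toDual ℝ E d)
        (AffineMap.lineMap (k := ℝ) x z 0) := by
      simpa using hd.hasFDerivAt
    simpa using hfd.comp_hasDerivAt 0 (AffineMap.hasDerivAt_lineMap (a := x) (b := z))
  have hslope := (hf.comp_affineMap (AffineMap.lineMap x z)).le_slope_of_hasDerivAt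
    (mem_univ 0) (mem_univ 1) one_pos hline
  simp [slope_def_field] at hslope
  linarith

end StrongConvexity

section ProximalGradient

variable {E : Type*} [NormedAddCommGroup E] [InnerProductSpace ℝ E]

noncomputable def proxGradModel (f g : E → ℝ) (L : ℝ) (w d z : E) : ℝ :=
  f w + ⟪d, z - w⟫ + L / 2 * ‖z - w‖ ^ 2 + g z

lemma strongConvexOn_proxGradModel (f : E → ℝ) {g : E → ℝ} {μ : ℝ}
    (hg : StrongConvexOn univ μ g) (L : ℝ) (w d : E) :
    StrongConvexOn univ (L + μ) (proxGradModel f g L w d) := by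
  have haff : StrongConvexOn univ 0 fun z => f w + ⟪d, z - w⟫ := by
    rw [strongConvexOn_zero]
    have hlin : (fun z => f w + ⟪d, z - w⟫) = fun z => innerₛₗ ℝ d z + (f w - ⟪d, w⟫) := by
      ext z
      simp only [innerₛₗ_apply_apply, inner_sub_right]
      ring
    rw [hlin]
    exact ((innerₛₗ ℝ d).convexOn convex_univ).add_const _
  have hsum := (haff.add (strongConvexOn_univ_half_sq_norm_sub L w)).add hg
  rw [zero_add] at hsum
  exact hsum

lemma proxGrad_step_le [CompleteSpace E] {f g : E → ℝ} {μ L : ℝ} {w d u' : E}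
    (hf : ConvexOn ℝ univ f) (hd : HasGradientAt f d w) (hg : StrongConvexOn univ μ g)
    (hmin : IsMinOn (proxGradModel f g L w d) univ u')
    (hdesc : f u' ≤ f w + ⟪d, u' - w⟫ + L / 2 * ‖u' - w‖ ^ 2) (v : E) :
    f u' + g u' + (L + μ) / 2 * ‖v - u'‖ ^ 2 ≤ f v + g v + L / 2 * ‖v - w‖ ^ 2 := by
  have hmodel := (strongConvexOn_proxGradModel f hg L w d).add_sq_le_of_isMinOn hmin v
  have hgrad := hf.add_inner_le_of_hasGradientAt hd v
  simp only [proxGradModel] at hmodel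
  linarith

end ProximalGradient

lemma exists_mul_pow_bound_of_sq_le {a : ℕ → ℝ} {A ρ : ℝ} (hρ0 : 0 < ρ) (hρ1 : ρ < 1)
    (h : ∀ k, a k ^ 2 ≤ A * ρ ^ k) :
    ∃ C > 0, ∃ τ : ℝ, 0 < τ ∧ τ < 1 ∧ ∀ k, a k ≤ C * τ ^ k := by
  refine ⟨√A + 1, by positivity, √ρ, Real.sqrt_pos.2 hρ0,
    (Real.sqrt_lt' one_pos).2 (by simpa using hρ1), fun k => ?_⟩
  calc a k ≤ √(a k ^ 2) := by rw [Real.sqrt_sq_eq_abs]; exact le_abs_self _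
    _ ≤ √(A * ρ ^ k) := Real.sqrt_le_sqrt (h k)
    _ = √A * √ρ ^ k := by rw [Real.sqrt_mul' _ (pow_nonneg hρ0.le k),
      ← Real.sqrt_sq (pow_nonneg (Real.sqrt_nonneg ρ) k), ← pow_mul, mul_comm k 2, pow_mul,
      Real.sq_sqrt hρ0.le]
    _ ≤ (√A + 1) * √ρ ^ k := by gcongr; linarith

lemma lyapunov_step {e e' s s' L L' μ t : ℝ} (hs : 0 ≤ s) (ht0 : 0 ≤ t) (ht1 : t ≤ 1)
    (hL : L ≤ (1 - t) ^ 2 * (L + μ)) (hcomb : e' ≤ (1 - t) * e + L * s)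
    (hdecr : e' + (L' + μ) / 2 * s' ≤ e + L / 2 * s) :
    e' + (1 - t) * (L' + μ) / 2 * s' ≤ (1 - t ^ 2) * (e + (1 - t) * (L + μ) / 2 * s) := by
  nlinarith [mul_le_mul_of_nonneg_left hcomb ht0,
    mul_le_mul_of_nonneg_left hdecr (sub_nonneg.2 ht1),
    mul_le_mul_of_nonneg_right hL (by positivity : 0 ≤ (1 + t) * s)]

section Convergence

variable {E : Type*} [NormedAddCommGroup E] {F : E → ℝ} {μ : ℝ}
  {u uhat : ℕ → E} {L : ℕ → ℝ}

lemma mul_sq_norm_smul_le_of_le_sqrt_div [NormedSpace ℝ E] {L L' ω : ℝ} (hL : 0 ≤ L)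
    (hL' : 0 < L') (hω₀ : 0 ≤ ω) (hω : ω ≤ √(L / L')) (v : E) :
    L' * ‖ω • v‖ ^ 2 ≤ L * ‖v‖ ^ 2 := by
  have hωsq := (Real.le_sqrt hω₀ (by positivity)).1 hω
  rw [le_div_iff₀ hL'] at hωsq
  rw [norm_smul, Real.norm_of_nonneg hω₀, mul_pow]
  nlinarith [sq_nonneg ‖v‖]

lemma proxGrad_sufficient_decrease
    (hstep : ∀ m v, F (u (m + 1)) + (L (m + 1) + μ) / 2 * ‖v - u (m + 1)‖ ^ 2 ≤
      F v + L (m + 1) / 2 * ‖v - uhat m‖ ^ 2)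
    (hextra : ∀ m, L (m + 1) * ‖uhat m - u m‖ ^ 2 ≤ L m * ‖u m - u (m - 1)‖ ^ 2) (m : ℕ) :
    F (u (m + 1)) + (L (m + 1) + μ) / 2 * ‖u (m + 1) - u m‖ ^ 2 ≤
      F (u m) + L m / 2 * ‖u m - u (m - 1)‖ ^ 2 := by
  have h := hstep m (u m)
  rw [norm_sub_rev (u m), norm_sub_rev (u m)] at h
  linarith [hextra m]

lemma proxGrad_le_convex_combination [NormedSpace ℝ E] (hμ : 0 ≤ μ)
    (hF : StrongConvexOn univ μ F)
    (hstep : ∀ m v, F (u (m + 1)) + (L (m + 1) + μ) / 2 * ‖v - u (m + 1)‖ ^ 2 ≤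
      F v + L (m + 1) / 2 * ‖v - uhat m‖ ^ 2)
    (hextra : ∀ m, L (m + 1) * ‖uhat m - u m‖ ^ 2 ≤ L m * ‖u m - u (m - 1)‖ ^ 2)
    {m : ℕ} (hL : 0 ≤ L (m + 1)) {t : ℝ} (ht0 : 0 ≤ t) (ht1 : t ≤ 1)
    (ht : 2 * L (m + 1) * t ≤ μ * (1 - t)) (z : E) :
    F (u (m + 1)) ≤ (1 - t) * F (u m) + t * F z + L m * ‖u m - u (m - 1)‖ ^ 2 := by
  set v := (1 - t) • u m + t • z
  have hstepv := hstep m v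
  have hFv : F v ≤ (1 - t) * F (u m) + t * F z - (1 - t) * t * (μ / 2 * ‖u m - z‖ ^ 2) :=
    hF.2 (mem_univ _) (mem_univ _) (sub_nonneg.2 ht1) ht0 (by ring)
  have hsplit : v - uhat m = t • (z - u m) + (u m - uhat m) := by simp only [v]; module
  have hdist : ‖v - uhat m‖ ^ 2 ≤ 2 * t ^ 2 * ‖u m - z‖ ^ 2 + 2 * ‖uhat m - u m‖ ^ 2 := by
    have htri := norm_add_le (t • (z - u m)) (u m - uhat m)
    rw [← hsplit, norm_smul, Real.norm_of_nonneg ht0, norm_sub_rev z (u m),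
      norm_sub_rev (u m) (uhat m)] at htri
    nlinarith [norm_nonneg (v - uhat m), sq_nonneg (t * ‖u m - z‖ - ‖uhat m - u m‖)]
  have hLt : L (m + 1) * t ^ 2 ≤ μ * t * (1 - t) / 2 := by nlinarith
  nlinarith [hextra m, mul_le_mul_of_nonneg_left hdist hL,
    mul_le_mul_of_nonneg_right hLt (sq_nonneg ‖u m - z‖),
    mul_nonneg (by nlinarith : 0 ≤ L (m + 1) + μ) (sq_nonneg ‖v - u (m + 1)‖)]

-- At `m = 0`, `u (m - 1)` is `u 0` (truncated subtraction): the convention `u⁻¹ = u⁰`.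
theorem proxGrad_rLinear_convergence [InnerProductSpace ℝ E] (hF : StrongConvexOn univ μ F)
    (hμ : 0 < μ) {ustar : E} (hmin : IsMinOn F univ ustar) {Lf : ℝ}
    (hL : ∀ m, 0 ≤ L m ∧ L m ≤ Lf)
    (hstep : ∀ m v, F (u (m + 1)) + (L (m + 1) + μ) / 2 * ‖v - u (m + 1)‖ ^ 2 ≤
      F v + L (m + 1) / 2 * ‖v - uhat m‖ ^ 2)
    (hextra : ∀ m, L (m + 1) * ‖uhat m - u m‖ ^ 2 ≤ L m * ‖u m - u (m - 1)‖ ^ 2) :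
    ∃ C > 0, ∃ τ : ℝ, 0 < τ ∧ τ < 1 ∧ ∀ k, ‖u k - ustar‖ ≤ C * τ ^ k := by
  -- any `t ≤ μ / (4 (Lf + μ))` meets the side conditions of both one-step estimates
  set t := μ / (4 * (Lf + μ))
  have hLfμ : 0 < Lf + μ := by linarith [(hL 0).1, (hL 0).2]
  have ht0 : 0 < t := by positivity
  have ht : ∀ m, 4 * t * (L m + μ) ≤ μ := fun m => by
    calc 4 * t * (L m + μ) ≤ 4 * t * (Lf + μ) := by gcongr; exact (hL m).2
      _ = μ := by simp only [t]; field_simp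
  have ht1 : t ≤ 1 / 4 := by nlinarith [ht 0, (hL 0).1]
  set Φ : ℕ → ℝ := fun m => F (u m) - F ustar + (1 - t) * (L m + μ) / 2 * ‖u m - u (m - 1)‖ ^ 2
  have hΦ : ∀ m, Φ (m + 1) ≤ (1 - t ^ 2) * Φ m := fun m => by
    have hcomb := proxGrad_le_convex_combination hμ.le hF hstep hextra (hL (m + 1)).1
      ht0.le (by linarith) (by nlinarith [ht (m + 1), (hL (m + 1)).1]) ustar
    have hdecr := proxGrad_sufficient_decrease hstep hextra m
    simp only [Φ, Nat.add_sub_cancel]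
    exact lyapunov_step (sq_nonneg _) ht0.le (by linarith)
      (by nlinarith [ht m, (hL m).1]) (by linarith) (by linarith)
  have hdist : ∀ k, ‖u k - ustar‖ ^ 2 ≤ 2 * Φ 0 / μ * (1 - t ^ 2) ^ k := fun k => by
    have hdecay := le_geom (by nlinarith) k (fun m _ => hΦ m)
    have hgrowth := hF.add_sq_le_of_isMinOn hmin (u k)
    have hΦk : F (u k) - F ustar ≤ Φ k := le_add_of_nonneg_right <|
      mul_nonneg (div_nonneg (mul_nonneg (by linarith) (by linarith [(hL k).1])) two_pos.le)
        (sq_nonneg _)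
    rw [div_mul_eq_mul_div, le_div_iff₀ hμ]
    nlinarith
  exact exists_mul_pow_bound_of_sq_le (by nlinarith) (by nlinarith) hdist

end Convergence

lemma hasDerivAt_max_zero_sq (r : ℝ) :
    HasDerivAt (fun s : ℝ => max s 0 ^ 2) (2 * max r 0) r := by
  refine hasDerivAt_of_hasDerivAt_of_ne' (g := fun s => 2 * max s 0) (x := 0) (fun s hs => ?_)
    (by fun_prop) (by fun_prop) r
  rcases hs.lt_or_gt with hs | hs
  · have hzero : (fun s : ℝ => max s 0 ^ 2) =ᶠ[𝓝 s] fun _ => 0 := by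
      filter_upwards [Iio_mem_nhds hs] with s' hs' using by simp [(mem_Iio.1 hs').le]
    rw [max_eq_right hs.le, mul_zero]
    exact (hasDerivAt_const s 0).congr_of_eventuallyEq hzero
  · have hsq : (fun s : ℝ => max s 0 ^ 2) =ᶠ[𝓝 s] fun s => s ^ 2 := by
      filter_upwards [Ioi_mem_nhds hs] with s' hs' using by rw [max_eq_left (mem_Ioi.1 hs').le]
    rw [max_eq_left hs.le]
    simpa using (hasDerivAt_pow 2 s).congr_of_eventuallyEq hsq

-- `r ↦ (max r 0 ^ 2 - max (r - 1) 0 ^ 2) / 2` is the Huber function, with derivative `r` clamped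
-- to `[0, 1]`; `phiH δ t` is `δ` times it at `r = (1 - t) / δ`.
lemma phiH_eq_max_sq {δ : ℝ} (hδ : 0 < δ) (t : ℝ) :
    phiH δ t = δ / 2 * (max ((1 - t) / δ) 0 ^ 2 - max ((1 - t) / δ - 1) 0 ^ 2) := by
  obtain ⟨r, rfl⟩ : ∃ r, t = 1 - δ * r := ⟨(1 - t) / δ, by field_simp; ring⟩
  have hr : (1 - (1 - δ * r)) / δ = r := by field_simp; ring
  rw [hr]
  unfold phiH
  rcases lt_or_ge r 0 with h0 | h0
  · rw [if_pos (by nlinarith), max_eq_right h0.le, max_eq_right (by linarith)]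
    ring
  rcases lt_or_ge r 1 with h1 | h1
  · rw [if_neg (by nlinarith), if_pos (by nlinarith), max_eq_left h0,
      max_eq_right (by linarith)]
    field_simp
    ring
  · rw [if_neg (by nlinarith), if_neg (by nlinarith), max_eq_left h0, max_eq_left (by linarith)]
    field_simp
    ring

lemma hasDerivAt_phiH {δ : ℝ} (hδ : 0 < δ) (t : ℝ) :
    HasDerivAt (phiH δ) (-(max ((1 - t) / δ) 0 - max ((1 - t) / δ - 1) 0)) t := by
  have hr : HasDerivAt (fun s : ℝ => (1 - s) / δ) (-1 / δ) t := by
    simpa using ((hasDerivAt_id t).const_sub 1).div_const δ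
  have hsum := (((hasDerivAt_max_zero_sq _).comp t hr).sub
    ((hasDerivAt_max_zero_sq _).comp t (hr.sub_const 1))).const_mul (δ / 2)
  rw [funext (phiH_eq_max_sq hδ)]
  refine hsum.congr_deriv ?_
  field_simp
  ring

lemma convexOn_phiH {δ : ℝ} (hδ : 0 < δ) : ConvexOn ℝ univ (phiH δ) := by
  refine Monotone.convexOn_univ_of_deriv (fun t => (hasDerivAt_phiH hδ t).differentiableAt) ?_
  intro a b hab
  simp only [(hasDerivAt_phiH hδ _).deriv, neg_le_neg_iff]
  have hdiv : (1 - b) / δ ≤ (1 - a) / δ := by gcongr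
  simp only [max_def]
  split_ifs <;> linarith

lemma phiH_nonneg {δ : ℝ} (hδ : 0 < δ) (t : ℝ) : 0 ≤ phiH δ t := by
  unfold phiH
  split_ifs with h1 h2
  · rfl
  · positivity
  · linarith

section BHSVM

variable {n p : ℕ}

noncomputable def bhsvmLoss (δ : ℝ) (x : Fin n → EuclideanSpace ℝ (Fin p)) (y : Fin n → ℝ)
    (u : EuclideanSpace ℝ (Fin (p + 1))) : ℝ :=
  1 / (n : ℝ) * ∑ i, phiH δ (y i * (u 0 + ∑ j : Fin p, x i j * u j.succ))

noncomputable def bhsvmReg (lam₁ lam₂ lam₃ : ℝ) (u : EuclideanSpace ℝ (Fin (p + 1))) : ℝ :=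
  lam₁ * ∑ j : Fin p, |u j.succ| + lam₂ / 2 * ∑ j : Fin p, u j.succ ^ 2 + lam₃ / 2 * u 0 ^ 2

lemma convexOn_bhsvmReg {lam₁ lam₂ lam₃ : ℝ} (h₁ : 0 ≤ lam₁) (h₂ : 0 ≤ lam₂) (h₃ : 0 ≤ lam₃) :
    ConvexOn ℝ univ (bhsvmReg (p := p) lam₁ lam₂ lam₃) := by
  have hsq : ConvexOn ℝ univ fun r : ℝ => r ^ 2 := even_two.convexOn_pow
  have hℓ₁ : ConvexOn ℝ univ fun u : EuclideanSpace ℝ (Fin (p + 1)) => ∑ j : Fin p, |u j.succ| :=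
    .finset_sum convex_univ fun j _ => convexOn_univ_norm.comp_euclideanSpace_apply j.succ
  have hw : ConvexOn ℝ univ fun u : EuclideanSpace ℝ (Fin (p + 1)) => ∑ j : Fin p, u j.succ ^ 2 :=
    .finset_sum convex_univ fun j _ => hsq.comp_euclideanSpace_apply j.succ
  have hb := hsq.comp_euclideanSpace_apply (0 : Fin (p + 1))
  exact ((hℓ₁.smul h₁).add (hw.smul (by positivity : 0 ≤ lam₂ / 2))).add
    (hb.smul (by positivity : 0 ≤ lam₃ / 2))

lemma bhsvmReg_nonneg {lam₁ lam₂ lam₃ : ℝ} (h₁ : 0 ≤ lam₁) (h₂ : 0 ≤ lam₂) (h₃ : 0 ≤ lam₃)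
    (u : EuclideanSpace ℝ (Fin (p + 1))) : 0 ≤ bhsvmReg lam₁ lam₂ lam₃ u := by
  unfold bhsvmReg
  have : 0 ≤ ∑ j : Fin p, |u j.succ| := Finset.sum_nonneg fun j _ => abs_nonneg _
  positivity

lemma norm_sq_eq_sq_zero_add_sum_succ (u : EuclideanSpace ℝ (Fin (p + 1))) :
    ‖u‖ ^ 2 = u 0 ^ 2 + ∑ j : Fin p, u j.succ ^ 2 := by
  simp [EuclideanSpace.norm_sq_eq, Fin.sum_univ_succ]

lemma bhsvmReg_sub_half_sq_norm (lam₁ lam₂ lam₃ m : ℝ) (u : EuclideanSpace ℝ (Fin (p + 1))) :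
    bhsvmReg lam₁ lam₂ lam₃ u - m / 2 * ‖u‖ ^ 2 = bhsvmReg lam₁ (lam₂ - m) (lam₃ - m) u := by
  rw [norm_sq_eq_sq_zero_add_sum_succ]
  unfold bhsvmReg
  ring

lemma strongConvexOn_bhsvmReg {lam₁ lam₂ lam₃ m : ℝ} (h₁ : 0 ≤ lam₁) (h₂ : m ≤ lam₂)
    (h₃ : m ≤ lam₃) : StrongConvexOn univ m (bhsvmReg (p := p) lam₁ lam₂ lam₃) := by
  rw [strongConvexOn_iff_convex]
  simp_rw [bhsvmReg_sub_half_sq_norm]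
  exact convexOn_bhsvmReg h₁ (sub_nonneg.2 h₂) (sub_nonneg.2 h₃)

lemma half_sq_norm_le_bhsvmReg {lam₁ lam₂ lam₃ m : ℝ} (h₁ : 0 ≤ lam₁) (h₂ : m ≤ lam₂)
    (h₃ : m ≤ lam₃) (u : EuclideanSpace ℝ (Fin (p + 1))) :
    m / 2 * ‖u‖ ^ 2 ≤ bhsvmReg lam₁ lam₂ lam₃ u := by
  have := bhsvmReg_sub_half_sq_norm lam₁ lam₂ lam₃ m u
  linarith [bhsvmReg_nonneg h₁ (sub_nonneg.2 h₂) (sub_nonneg.2 h₃) u]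

lemma bhsvmLoss_nonneg {δ : ℝ} (hδ : 0 < δ) (x : Fin n → EuclideanSpace ℝ (Fin p))
    (y : Fin n → ℝ) (u : EuclideanSpace ℝ (Fin (p + 1))) : 0 ≤ bhsvmLoss δ x y u :=
  mul_nonneg (by positivity) (Finset.sum_nonneg fun i _ => phiH_nonneg hδ _)

lemma convexOn_bhsvmLoss {δ : ℝ} (hδ : 0 < δ) (x : Fin n → EuclideanSpace ℝ (Fin p))
    (y : Fin n → ℝ) : ConvexOn ℝ univ (bhsvmLoss δ x y) := by
  refine (ConvexOn.finset_sum convex_univ fun i _ => ?_).smul (by positivity : 0 ≤ 1 / (n : ℝ))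
  let margin : EuclideanSpace ℝ (Fin (p + 1)) →L[ℝ] ℝ :=
    y i • (EuclideanSpace.proj 0 + ∑ j : Fin p, x i j • EuclideanSpace.proj j.succ)
  refine ((convexOn_phiH hδ).comp_linearMap margin.toLinearMap).congr fun u _ => ?_
  simp [margin, mul_add]

end BHSVM

theorem bhsvm_pg_R_linear_convergence_general (n p : ℕ) (δ : ℝ) (hδ : 0 < δ)
    (x : Fin n → EuclideanSpace ℝ (Fin p)) (y : Fin n → ℝ)
    (lam₁ lam₂ lam₃ : ℝ) (hlam₁ : 0 ≤ lam₁) (hlam₂ : 0 < lam₂) (hlam₃ : 0 < lam₃)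
    (f g : EuclideanSpace ℝ (Fin (p + 1)) → ℝ)
    (hf : ∀ u, f u =
      (1 / (n : ℝ)) * ∑ i, phiH δ (y i * (u 0 + ∑ j : Fin p, x i j * u j.succ)))
    (hg : ∀ u, g u = lam₁ * ∑ j : Fin p, |u j.succ| +
      lam₂ / 2 * ∑ j : Fin p, (u j.succ) ^ 2 + lam₃ / 2 * (u 0) ^ 2)
    (Lf : ℝ)
    (gradf : EuclideanSpace ℝ (Fin (p + 1)) → EuclideanSpace ℝ (Fin (p + 1)))
    (hgradf : ∀ u, HasGradientAt f (gradf u) u)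
    (u uhat : ℕ → EuclideanSpace ℝ (Fin (p + 1)))
    (Lk : ℕ → ℝ) (ω : ℕ → ℝ)
    (hLk : ∀ k, 0 < Lk k ∧ Lk k ≤ Lf)
    (hω : ∀ k : ℕ, 1 ≤ k → 0 ≤ ω (k - 1) ∧ ω (k - 1) ≤ Real.sqrt (Lk (k - 1) / Lk k))
    (huhat : ∀ k : ℕ, 1 ≤ k →
      uhat (k - 1) = u (k - 1) + ω (k - 1) • (u (k - 1) - u (k - 2)))
    (hmin : ∀ k : ℕ, 1 ≤ k → ∀ v : EuclideanSpace ℝ (Fin (p + 1)),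
      f (uhat (k - 1)) + ⟪gradf (uhat (k - 1)), u k - uhat (k - 1)⟫ +
          Lk k / 2 * ‖u k - uhat (k - 1)‖ ^ 2 + g (u k) ≤
        f (uhat (k - 1)) + ⟪gradf (uhat (k - 1)), v - uhat (k - 1)⟫ +
          Lk k / 2 * ‖v - uhat (k - 1)‖ ^ 2 + g v)
    (hdesc : ∀ k : ℕ, 1 ≤ k →
      f (u k) ≤ f (uhat (k - 1)) + ⟪gradf (uhat (k - 1)), u k - uhat (k - 1)⟫ +
        Lk k / 2 * ‖u k - uhat (k - 1)‖ ^ 2) :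
    -- `g` is strongly convex with modulus `min(λ₂, λ₃)`
    (∀ u' v gv, gv ∈ SubderivAt g v →
      g u' - g v ≥ ⟪gv, u' - v⟫ + (min lam₂ lam₃) / 2 * ‖u' - v‖ ^ 2) ∧
    -- `F = f + g` has a unique minimizer `u*`, and `u^k → u*` R-linearly
    ∃ ustar : EuclideanSpace ℝ (Fin (p + 1)),
      (∀ v, f ustar + g ustar ≤ f v + g v) ∧
      (∀ v, (∀ v', f v + g v ≤ f v' + g v') → v = ustar) ∧
      ∃ C > 0, ∃ τ : ℝ, 0 < τ ∧ τ < 1 ∧ ∀ k : ℕ, ‖u k - ustar‖ ≤ C * τ ^ k := by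
  have hμ : 0 < min lam₂ lam₃ := lt_min hlam₂ hlam₃
  have hfF : f = bhsvmLoss δ x y := funext hf
  have hgF : g = bhsvmReg lam₁ lam₂ lam₃ := funext hg
  have hfc : ConvexOn ℝ univ f := hfF ▸ convexOn_bhsvmLoss hδ x y
  have hgs : StrongConvexOn univ (min lam₂ lam₃) g :=
    hgF ▸ strongConvexOn_bhsvmReg hlam₁ (min_le_left _ _) (min_le_right _ _)
  have hFs : StrongConvexOn univ (min lam₂ lam₃) (f + g) := by
    simpa using (strongConvexOn_zero.2 hfc).add hgs
  have hFc : Continuous (f + g) := continuousOn_univ.1 <|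
    (hfc.add (hgF ▸ convexOn_bhsvmReg hlam₁ hlam₂.le hlam₃.le)).continuousOn isOpen_univ
  obtain ⟨ustar, hustar⟩ := exists_isMinOn_of_half_sq_norm_le hFc hμ fun v => by
    rw [Pi.add_apply, hfF, hgF]
    linarith [bhsvmLoss_nonneg hδ x y v,
      half_sq_norm_le_bhsvmReg hlam₁ (min_le_left lam₂ lam₃) (min_le_right _ _) v]
  refine ⟨fun u' v gv hgv => hgs.inner_add_sq_le_sub hgv u', ustar, fun v => hustar (mem_univ v),
    fun v hv => (hFs.strictConvexOn hμ).eq_of_isMinOn (fun w _ => hv w) hustar trivial trivial,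
    proxGrad_rLinear_convergence (uhat := uhat) hFs hμ hustar
      (fun m => ⟨(hLk m).1.le, (hLk m).2⟩) (fun m v => ?_) (fun m => ?_)⟩
  · exact proxGrad_step_le hfc (hgradf _) hgs (isMinOn_univ_iff.2 (hmin (m + 1) m.succ_pos))
      (hdesc (m + 1) m.succ_pos) v
  · have hmomentum : uhat m = u m + ω m • (u m - u (m - 1)) := huhat (m + 1) m.succ_pos
    rw [hmomentum, add_sub_cancel_left]
    exact mul_sq_norm_smul_le_of_le_sqrt_div (hLk m).1.le (hLk (m + 1)).1
      (hω (m + 1) m.succ_pos).1 (hω (m + 1) m.succ_pos).2 _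

/-- for the B-HSVM objective `F = f + g` on `ℝ^{p+1}`
(`u = (b; w)` with `b = u 0`, `w_j = u j.succ`), the regularizer `g` is
strongly convex with modulus `min(λ₂, λ₃)`, `F` has a unique minimizer `u*`,
and any PG sequence with extrapolation weights `ω_{k-1} ≤ √(L_{k-1}/L_k)`,
step constants `0 < L_k ≤ L_f`, the descent condition, and nonincreasing
objective values converges R-linearly to `u*`.  (`u^{-1} = u^0` is realized
by truncated subtraction.) -/
theorem bhsvm_pg_R_linear_convergence (n p : ℕ) (hn : 0 < n) (δ : ℝ) (hδ : 0 < δ)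
    (x : Fin n → EuclideanSpace ℝ (Fin p)) (y : Fin n → ℝ)
    (hy : ∀ i, y i = 1 ∨ y i = -1)
    (lam₁ lam₂ lam₃ : ℝ) (hlam₁ : 0 ≤ lam₁) (hlam₂ : 0 < lam₂) (hlam₃ : 0 < lam₃)
    (f g : EuclideanSpace ℝ (Fin (p + 1)) → ℝ)
    (hf : ∀ u, f u =
      (1 / (n : ℝ)) * ∑ i, phiH δ (y i * (u 0 + ∑ j : Fin p, x i j * u j.succ)))
    (hg : ∀ u, g u = lam₁ * ∑ j : Fin p, |u j.succ| +
      lam₂ / 2 * ∑ j : Fin p, (u j.succ) ^ 2 + lam₃ / 2 * (u 0) ^ 2)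
    (Lf : ℝ) (hLf : Lf = (1 / ((n : ℝ) * δ)) * ∑ i, (y i) ^ 2 * (1 + ‖x i‖ ^ 2))
    (gradf : EuclideanSpace ℝ (Fin (p + 1)) → EuclideanSpace ℝ (Fin (p + 1)))
    (hgradf : ∀ u, HasGradientAt f (gradf u) u)
    (u uhat : ℕ → EuclideanSpace ℝ (Fin (p + 1)))
    (Lk : ℕ → ℝ) (ω : ℕ → ℝ)
    (hLk : ∀ k, 0 < Lk k ∧ Lk k ≤ Lf)
    (hω : ∀ k : ℕ, 1 ≤ k → 0 ≤ ω (k - 1) ∧ ω (k - 1) ≤ Real.sqrt (Lk (k - 1) / Lk k))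
    (huhat : ∀ k : ℕ, 1 ≤ k →
      uhat (k - 1) = u (k - 1) + ω (k - 1) • (u (k - 1) - u (k - 2)))
    (hmin : ∀ k : ℕ, 1 ≤ k → ∀ v : EuclideanSpace ℝ (Fin (p + 1)),
      f (uhat (k - 1)) + ⟪gradf (uhat (k - 1)), u k - uhat (k - 1)⟫ +
          Lk k / 2 * ‖u k - uhat (k - 1)‖ ^ 2 + g (u k) ≤
        f (uhat (k - 1)) + ⟪gradf (uhat (k - 1)), v - uhat (k - 1)⟫ +
          Lk k / 2 * ‖v - uhat (k - 1)‖ ^ 2 + g v)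
    (hdesc : ∀ k : ℕ, 1 ≤ k →
      f (u k) ≤ f (uhat (k - 1)) + ⟪gradf (uhat (k - 1)), u k - uhat (k - 1)⟫ +
        Lk k / 2 * ‖u k - uhat (k - 1)‖ ^ 2)
    (hmono : ∀ k : ℕ, 1 ≤ k → f (u k) + g (u k) ≤ f (u (k - 1)) + g (u (k - 1))) :
    -- `g` is strongly convex with modulus `min(λ₂, λ₃)`
    (∀ u' v gv, gv ∈ SubderivAt g v →
      g u' - g v ≥ ⟪gv, u' - v⟫ + (min lam₂ lam₃) / 2 * ‖u' - v‖ ^ 2) ∧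
    -- `F = f + g` has a unique minimizer `u*`, and `u^k → u*` R-linearly
    ∃ ustar : EuclideanSpace ℝ (Fin (p + 1)),
      (∀ v, f ustar + g ustar ≤ f v + g v) ∧
      (∀ v, (∀ v', f v + g v ≤ f v' + g v') → v = ustar) ∧
      ∃ C > 0, ∃ τ : ℝ, 0 < τ ∧ τ < 1 ∧ ∀ k : ℕ, ‖u k - ustar‖ ≤ C * τ ^ k :=
  bhsvm_pg_R_linear_convergence_general n p δ hδ x y lam₁ lam₂ lam₃ hlam₁ hlam₂ hlam₃ f g hf hg Lf
    gradf hgradf u uhat Lk ω hLk hω huhat hmin hdesc
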